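/- arXiv:2312.16819 — 2 statements merged into one kernel-verified Lean document; each statement's English description precedes it below -/
import Mathlib

section
/- Let d ≥ 3 and let G = S_{d−1}×S_1 be the subgroup of S_d of permutations fixing the index d. Then each of the intersections 𝔻_{d,2} ∩ M(d,d)^G, 𝕊_{d,2} ∩ M(d,d)^G, and 𝔸_{d,1} ∩ M(d,d)^G is one-dimensional: the first consists of the multiples of diag(−1, …, −1, d−1); the second consists of the multiples of the symmetric matrix whose (i,j)-entry is −2/(d−2) for distinct i, j ≤ d−1, whose (i,d)- and (d,i)-entries are 1 for i ≤ d−1, and whose diagonal is zero; the third consists of the multiples of the skew-symmetric matrix whose (i,d)-entry is −1 and (d,i)-entry is 1 for i ≤ d−1 and all other entries zero. Consequently V_s ∩ M(d,d)^G is three-dimensional, where V_s = 𝔻_{d,2} + 𝕊_{d,2} + 𝔸_{d,1}. -/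
open Matrix

/-- The permutation matrix of `σ`. -/
def permMat {d : ℕ} (σ : Equiv.Perm (Fin d)) : Matrix (Fin d) (Fin d) ℝ :=
  Matrix.of fun i j => if σ j = i then (1 : ℝ) else 0

/-- The fixed-point space of a set `G` of permutations for the diagonal action
`W ↦ P_σ W P_σᵀ` on `d × d` matrices. -/
def fixedSpace {d : ℕ} (G : Set (Equiv.Perm (Fin d))) :
    Submodule ℝ (Matrix (Fin d) (Fin d) ℝ) where
  carrier := {W | ∀ σ ∈ G, permMat σ * W * (permMat σ)ᵀ = W}
  zero_mem' := by intro σ _; simp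
  add_mem' := by
    intro a b ha hb σ hσ
    rw [Matrix.mul_add, Matrix.add_mul, ha σ hσ, hb σ hσ]
  smul_mem' := by
    intro c a ha σ hσ
    rw [Matrix.mul_smul, Matrix.smul_mul, ha σ hσ]

/-- `𝔻_{d,2}`: trace-zero diagonal matrices. -/
def Dd2 (d : ℕ) : Submodule ℝ (Matrix (Fin d) (Fin d) ℝ) where
  carrier := {A | (∀ i j, i ≠ j → A i j = 0) ∧ ∑ i, A i i = 0}
  zero_mem' := ⟨fun i j _ => rfl, by simp⟩
  add_mem' := by
    rintro a b ⟨ha1, ha2⟩ ⟨hb1, hb2⟩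
    refine ⟨fun i j hij => ?_, ?_⟩
    · simp [Matrix.add_apply, ha1 i j hij, hb1 i j hij]
    · simp [Matrix.add_apply, Finset.sum_add_distrib, ha2, hb2]
  smul_mem' := by
    rintro c a ⟨ha1, ha2⟩
    refine ⟨fun i j hij => ?_, ?_⟩
    · simp [Matrix.smul_apply, ha1 i j hij]
    · simp [Matrix.smul_apply, ← Finset.mul_sum, ha2]

/-- `𝕊_{d,2}`: symmetric, zero diagonal, off-diagonal entries `x i + x j`, `∑ x = 0`. -/
def Sd2 (d : ℕ) : Submodule ℝ (Matrix (Fin d) (Fin d) ℝ) where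
  carrier := {A | ∃ x : Fin d → ℝ, (∑ i, x i = 0) ∧ (∀ i, A i i = 0) ∧
    ∀ i j, i ≠ j → A i j = x i + x j}
  zero_mem' := ⟨0, by simp, fun i => rfl, fun i j _ => by simp⟩
  add_mem' := by
    rintro a b ⟨x, hx0, hxd, hx⟩ ⟨y, hy0, hyd, hy⟩
    refine ⟨x + y, by simp [Finset.sum_add_distrib, hx0, hy0], fun i => ?_,
      fun i j hij => ?_⟩
    · simp [Matrix.add_apply, hxd i, hyd i]
    · simp [Matrix.add_apply, hx i j hij, hy i j hij]; ring
  smul_mem' := by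
    rintro c a ⟨x, hx0, hxd, hx⟩
    refine ⟨c • x, by simp [← Finset.mul_sum, hx0], fun i => ?_, fun i j hij => ?_⟩
    · simp [Matrix.smul_apply, hxd i]
    · simp [Matrix.smul_apply, hx i j hij]; ring

/-- `𝔸_{d,1}`: matrices with `A i j = x i − x j` for some `x ∈ ℝᵈ`. -/
def Ad1 (d : ℕ) : Submodule ℝ (Matrix (Fin d) (Fin d) ℝ) where
  carrier := {A | ∃ x : Fin d → ℝ, ∀ i j, A i j = x i - x j}
  zero_mem' := ⟨0, by simp⟩
  add_mem' := by
    rintro a b ⟨x, hx⟩ ⟨y, hy⟩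
    refine ⟨x + y, fun i j => ?_⟩
    simp [Matrix.add_apply, hx, hy]; ring
  smul_mem' := by
    rintro c a ⟨x, hx⟩
    refine ⟨c • x, fun i j => ?_⟩
    simp [Matrix.smul_apply, hx]; ring

/-
For `G` the stabiliser of `e`, a matrix is `G`-fixed iff its `(i, j)` entry depends only on which
of `i = e`, `j = e`, `i = j` hold. In each of `𝔻`, `𝕊`, `𝔸` this forces the parametrising vector
to be constant off `e`, and the trace or sum condition then fixes its value at `e`.

For `V_s`, the components of `B + C + E ∈ 𝔻 + 𝕊 + 𝔸` are recovered as the diagonal part `B`, the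
skew-symmetric part `E` and the rest; these projections commute with the action, so a fixed sum
has fixed components. The sum is direct since `𝔻 ∩ 𝕊 = 0` and `(𝔻 + 𝕊) ∩ 𝔸 = 0`.
-/

theorem Submodule.finrank_sup_of_disjoint {K V : Type*} [DivisionRing K] [AddCommGroup V]
    [Module K V] {s t : Submodule K V} [FiniteDimensional K s] [FiniteDimensional K t]
    (h : Disjoint s t) : Module.finrank K ↥(s ⊔ t) = Module.finrank K s + Module.finrank K t := by
  have := Submodule.finrank_sup_add_finrank_inf_eq s t
  rwa [h.eq_bot, finrank_bot, add_zero] at this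

section

variable {d : ℕ}

theorem permMat_mul_mul_transpose (σ : Equiv.Perm (Fin d)) (W : Matrix (Fin d) (Fin d) ℝ) :
    permMat σ * W * (permMat σ)ᵀ = W.submatrix σ.symm σ.symm := by
  ext i j
  simp [permMat, Matrix.mul_apply, ← Equiv.eq_symm_apply]

theorem mem_fixedSpace_iff {G : Set (Equiv.Perm (Fin d))} {W : Matrix (Fin d) (Fin d) ℝ} :
    W ∈ fixedSpace G ↔ ∀ σ ∈ G, W.submatrix σ.symm σ.symm = W :=
  forall₂_congr fun σ _ => by rw [permMat_mul_mul_transpose]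

theorem transpose_mem_fixedSpace {G : Set (Equiv.Perm (Fin d))} {W : Matrix (Fin d) (Fin d) ℝ}
    (hW : W ∈ fixedSpace G) : Wᵀ ∈ fixedSpace G := by
  rw [mem_fixedSpace_iff] at hW ⊢
  intro σ hσ
  rw [← transpose_submatrix, hW σ hσ]

theorem diagonal_diag_mem_fixedSpace {G : Set (Equiv.Perm (Fin d))}
    {W : Matrix (Fin d) (Fin d) ℝ} (hW : W ∈ fixedSpace G) :
    diagonal W.diag ∈ fixedSpace G := by
  rw [mem_fixedSpace_iff] at hW ⊢
  intro σ hσ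
  rw [submatrix_diagonal_equiv, ← diag_submatrix, hW σ hσ]

theorem mem_fixedSpace_stabilizer_of_pattern (e : Fin d) (W : Matrix (Fin d) (Fin d) ℝ)
    (h : ∀ i j i' j' : Fin d, (i = e ↔ i' = e) → (j = e ↔ j' = e) → (i = j ↔ i' = j') →
      W i j = W i' j') :
    W ∈ fixedSpace {σ : Equiv.Perm (Fin d) | σ e = e} := by
  rw [mem_fixedSpace_iff]
  intro σ hσ
  have he : σ.symm e = e := by rw [Equiv.symm_apply_eq]; exact hσ.symm
  ext i j
  exact h _ _ _ _ (σ.symm.injective.eq_iff' he) (σ.symm.injective.eq_iff' he)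
    σ.symm.injective.eq_iff

theorem apply_swap_of_mem_fixedSpace_stabilizer {e a b : Fin d} {W : Matrix (Fin d) (Fin d) ℝ}
    (hW : W ∈ fixedSpace {σ : Equiv.Perm (Fin d) | σ e = e}) (ha : a ≠ e) (hb : b ≠ e)
    (i j : Fin d) : W (Equiv.swap a b i) (Equiv.swap a b j) = W i j := by
  have hσ : Equiv.swap a b e = e := Equiv.swap_apply_of_ne_of_ne ha.symm hb.symm
  have := mem_fixedSpace_iff.1 hW _ hσ
  rw [Equiv.symm_swap] at this
  exact congrFun (congrFun this i) j

theorem sum_eq_add_mul_of_forall_ne_eq (e : Fin d) {x : Fin d → ℝ} {c : ℝ} (hx : ∀ i ≠ e, x i = c) :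
    ∑ i, x i = x e + ((d : ℝ) - 1) * c := by
  rw [Fintype.sum_eq_add_sum_compl e,
    Finset.sum_congr rfl fun i hi => hx i (by simpa using hi), Finset.sum_const,
    Finset.card_compl, Finset.card_singleton, Fintype.card_fin, nsmul_eq_mul,
    Nat.cast_sub (Fin.pos e)]
  simp

theorem isDiag_of_mem_Dd2 {B : Matrix (Fin d) (Fin d) ℝ} (hB : B ∈ Dd2 d) : B.IsDiag :=
  fun i j hij => hB.1 i j hij

theorem isSymm_of_mem_Sd2 {C : Matrix (Fin d) (Fin d) ℝ} (hC : C ∈ Sd2 d) : C.IsSymm := by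
  obtain ⟨x, -, -, hx⟩ := hC
  ext i j
  rcases eq_or_ne i j with rfl | hij
  · rfl
  · rw [transpose_apply, hx j i hij.symm, hx i j hij, add_comm]

theorem diag_eq_zero_of_mem_Sd2 {C : Matrix (Fin d) (Fin d) ℝ} (hC : C ∈ Sd2 d) : C.diag = 0 :=
  funext hC.choose_spec.2.1

theorem transpose_eq_neg_of_mem_Ad1 {E : Matrix (Fin d) (Fin d) ℝ} (hE : E ∈ Ad1 d) :
    Eᵀ = -E := by
  obtain ⟨x, hx⟩ := hE
  ext i j
  rw [transpose_apply, neg_apply, hx, hx, neg_sub]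

theorem diag_eq_zero_of_mem_Ad1 {E : Matrix (Fin d) (Fin d) ℝ} (hE : E ∈ Ad1 d) : E.diag = 0 := by
  obtain ⟨x, hx⟩ := hE
  ext i
  rw [diag_apply, hx, sub_self, Pi.zero_apply]

theorem disjoint_Dd2_Sd2 : Disjoint (Dd2 d) (Sd2 d) := by
  rw [Submodule.disjoint_def]
  intro W hD hS
  rw [← (isDiag_of_mem_Dd2 hD).diagonal_diag, diag_eq_zero_of_mem_Sd2 hS]
  exact diagonal_zero

theorem disjoint_Dd2_sup_Sd2_Ad1 : Disjoint (Dd2 d ⊔ Sd2 d) (Ad1 d) := by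
  rw [Submodule.disjoint_def]
  intro W hDS hA
  obtain ⟨B, hB, C, hC, rfl⟩ := Submodule.mem_sup.1 hDS
  have hsymm : (B + C)ᵀ = B + C := by
    rw [transpose_add, (isDiag_of_mem_Dd2 hB).isSymm, isSymm_of_mem_Sd2 hC]
  have hskew := transpose_eq_neg_of_mem_Ad1 hA
  rw [hsymm] at hskew
  ext i j
  have hij := congr_fun₂ hskew i j
  rw [neg_apply] at hij
  rw [Matrix.zero_apply]
  linarith

theorem sup_inf_fixedSpace (G : Set (Equiv.Perm (Fin d))) :
    (Dd2 d ⊔ Sd2 d ⊔ Ad1 d) ⊓ fixedSpace G =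
      Dd2 d ⊓ fixedSpace G ⊔ Sd2 d ⊓ fixedSpace G ⊔ Ad1 d ⊓ fixedSpace G := by
  refine le_antisymm ?_ (sup_le (sup_le ?_ ?_) ?_)
  · rintro W ⟨hW, hF⟩
    obtain ⟨BC, hBC, E, hE, rfl⟩ := Submodule.mem_sup.1 hW
    obtain ⟨B, hB, C, hC, rfl⟩ := Submodule.mem_sup.1 hBC
    have hB' : B = diagonal (B + C + E).diag := by
      rw [diag_add, diag_add, diag_eq_zero_of_mem_Sd2 hC, diag_eq_zero_of_mem_Ad1 hE,
        add_zero, add_zero, (isDiag_of_mem_Dd2 hB).diagonal_diag]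
    have hE' : E = (1 / 2 : ℝ) • (B + C + E - (B + C + E)ᵀ) := by
      rw [transpose_add, transpose_add, (isDiag_of_mem_Dd2 hB).isSymm, isSymm_of_mem_Sd2 hC,
        transpose_eq_neg_of_mem_Ad1 hE]
      module
    have hBF : B ∈ fixedSpace G := hB' ▸ diagonal_diag_mem_fixedSpace hF
    have hEF : E ∈ fixedSpace G :=
      hE' ▸ Submodule.smul_mem _ _ (Submodule.sub_mem _ hF (transpose_mem_fixedSpace hF))
    have hCF : C ∈ fixedSpace G := by
      convert Submodule.sub_mem _ (Submodule.sub_mem _ hF hBF) hEF using 1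
      abel
    exact Submodule.add_mem_sup (Submodule.add_mem_sup ⟨hB, hBF⟩ ⟨hC, hCF⟩) ⟨hE, hEF⟩
  · exact inf_le_inf_right _ (le_sup_left.trans le_sup_left)
  · exact inf_le_inf_right _ (le_sup_right.trans le_sup_left)
  · exact inf_le_inf_right _ le_sup_right

theorem apply_left_eq_of_mem_fixedSpace_stabilizer {e a b : Fin d}
    {W : Matrix (Fin d) (Fin d) ℝ} (hW : W ∈ fixedSpace {σ : Equiv.Perm (Fin d) | σ e = e})
    (ha : a ≠ e) (hb : b ≠ e) : W a e = W b e := by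
  simpa [Equiv.swap_apply_of_ne_of_ne ha.symm hb.symm] using
    (apply_swap_of_mem_fixedSpace_stabilizer hW ha hb a e).symm

theorem apply_self_eq_of_mem_fixedSpace_stabilizer {e a b : Fin d}
    {W : Matrix (Fin d) (Fin d) ℝ} (hW : W ∈ fixedSpace {σ : Equiv.Perm (Fin d) | σ e = e})
    (ha : a ≠ e) (hb : b ≠ e) : W a a = W b b := by
  simpa using (apply_swap_of_mem_fixedSpace_stabilizer hW ha hb a a).symm

theorem Dd2_inf_fixedSpace_stabilizer (hd : 2 ≤ d) (e : Fin d) :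
    Dd2 d ⊓ fixedSpace {σ : Equiv.Perm (Fin d) | σ e = e} =
      Submodule.span ℝ {diagonal fun i : Fin d => if i = e then (d : ℝ) - 1 else -1} := by
  refine le_antisymm ?_ ?_
  · rintro W ⟨hD, hF⟩
    obtain ⟨z, hz⟩ := @exists_ne _ (Fin.nontrivial_iff_two_le.2 hd) e
    have hconst : ∀ i ≠ e, W.diag i = W z z := fun i hi =>
      apply_self_eq_of_mem_fixedSpace_stabilizer hF hi hz
    have hsum : 0 = W e e + ((d : ℝ) - 1) * W z z := hD.2 ▸ sum_eq_add_mul_of_forall_ne_eq e hconst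
    have hdiag : W.diag = -W z z • fun i : Fin d => if i = e then (d : ℝ) - 1 else -1 := by
      funext i
      rcases eq_or_ne i e with rfl | hi
      · simp only [Pi.smul_apply, if_pos, smul_eq_mul, diag_apply]
        linarith
      · simpa [hi] using hconst i hi
    refine Submodule.mem_span_singleton.2 ⟨-W z z, ?_⟩
    rw [← diagonal_smul, ← hdiag, (isDiag_of_mem_Dd2 hD).diagonal_diag]
  · rw [Submodule.span_le, Set.singleton_subset_iff]
    refine ⟨⟨fun i j hij => diagonal_apply_ne _ hij, ?_⟩,
      mem_fixedSpace_stabilizer_of_pattern e _ fun i j i' j' hi _ hij => ?_⟩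
    · simp_rw [diagonal_apply_eq]
      rw [sum_eq_add_mul_of_forall_ne_eq e (c := -1) fun i hi => if_neg hi, if_pos rfl]
      ring
    · simp only [diagonal_apply, hi, hij]

theorem of_ite_mem_Sd2 (hd : (d : ℝ) ≠ 2) (e : Fin d) :
    (Matrix.of fun i j : Fin d => if i = j then (0 : ℝ)
      else if i = e ∨ j = e then 1 else -2 / ((d : ℝ) - 2)) ∈ Sd2 d := by
  have hd2 : (d : ℝ) - 2 ≠ 0 := sub_ne_zero.2 hd
  refine ⟨fun i => if i = e then ((d : ℝ) - 1) / ((d : ℝ) - 2) else -1 / ((d : ℝ) - 2),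
    ?_, fun i => if_pos rfl, fun i j hij => ?_⟩
  · rw [sum_eq_add_mul_of_forall_ne_eq e fun i hi => if_neg hi, if_pos rfl]
    field_simp
    ring
  rw [of_apply, if_neg hij]
  dsimp only
  by_cases hi : i = e
  · rw [if_pos (Or.inl hi), if_pos hi, if_neg fun hj => hij (hi.trans hj.symm)]
    field_simp
    ring
  by_cases hj : j = e
  · rw [if_pos (Or.inr hj), if_neg hi, if_pos hj]
    field_simp
    ring
  rw [if_neg (by tauto), if_neg hi, if_neg hj]
  field_simp
  ring

theorem Sd2_inf_fixedSpace_stabilizer (hd : 3 ≤ d) (e : Fin d) :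
    Sd2 d ⊓ fixedSpace {σ : Equiv.Perm (Fin d) | σ e = e} =
      Submodule.span ℝ {Matrix.of fun i j : Fin d => if i = j then (0 : ℝ)
        else if i = e ∨ j = e then 1 else -2 / ((d : ℝ) - 2)} := by
  have hd3 : (3 : ℝ) ≤ d := by exact_mod_cast hd
  refine le_antisymm ?_ ?_
  · rintro W ⟨⟨x, hx0, hxd, hx⟩, hF⟩
    obtain ⟨z, hz⟩ := @exists_ne _ (Fin.nontrivial_iff_two_le.2 (by omega)) e
    have hconst : ∀ i ≠ e, x i = x z := fun i hi => by
      have := apply_left_eq_of_mem_fixedSpace_stabilizer hF hi hz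
      rw [hx i e hi, hx z e hz] at this
      linarith
    have hxe : x e = -((d : ℝ) - 1) * x z := by linarith [sum_eq_add_mul_of_forall_ne_eq e hconst]
    refine Submodule.mem_span_singleton.2 ⟨x z + x e, ?_⟩
    ext i j
    rw [Matrix.smul_apply, of_apply, smul_eq_mul]
    rcases eq_or_ne i j with rfl | hij
    · rw [if_pos rfl, hxd, mul_zero]
    rw [hx i j hij, if_neg hij]
    rcases eq_or_ne i e with rfl | hi
    · rw [if_pos (Or.inl rfl), hconst j hij.symm]
      ring
    rcases eq_or_ne j e with rfl | hj
    · rw [if_pos (Or.inr rfl), hconst i hi]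
      ring
    rw [if_neg (by tauto), hconst i hi, hconst j hj, hxe]
    field_simp [show (d : ℝ) - 2 ≠ 0 by linarith]
    ring
  · rw [Submodule.span_le, Set.singleton_subset_iff]
    refine ⟨of_ite_mem_Sd2 (by linarith) e,
      mem_fixedSpace_stabilizer_of_pattern e _ fun i j i' j' hi hj hij => ?_⟩
    simp only [of_apply, hi, hj, hij]

theorem Ad1_inf_fixedSpace_stabilizer (hd : 2 ≤ d) (e : Fin d) :
    Ad1 d ⊓ fixedSpace {σ : Equiv.Perm (Fin d) | σ e = e} =
      Submodule.span ℝ {Matrix.of fun i j : Fin d =>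
        if i = e ∧ j ≠ e then (1 : ℝ) else if j = e ∧ i ≠ e then -1 else 0} := by
  refine le_antisymm ?_ ?_
  · rintro W ⟨⟨x, hx⟩, hF⟩
    obtain ⟨z, hz⟩ := @exists_ne _ (Fin.nontrivial_iff_two_le.2 hd) e
    have hconst : ∀ i ≠ e, x i = x z := fun i hi => by
      have := apply_left_eq_of_mem_fixedSpace_stabilizer hF hi hz
      rw [hx i e, hx z e] at this
      linarith
    refine Submodule.mem_span_singleton.2 ⟨x e - x z, ?_⟩
    ext i j
    rw [Matrix.smul_apply, of_apply, smul_eq_mul, hx]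
    by_cases hi : i = e <;> by_cases hj : j = e
    · simp [hi, hj]
    · simp [hi, hj, hconst j hj]
    · simp [hi, hj, hconst i hi]
    · simp [hi, hj, hconst i hi, hconst j hj]
  · rw [Submodule.span_le, Set.singleton_subset_iff]
    refine ⟨⟨fun i => if i = e then 1 else 0, fun i j => ?_⟩,
      mem_fixedSpace_stabilizer_of_pattern e _ fun i j i' j' hi hj _ => ?_⟩
    · rw [of_apply]
      by_cases hi : i = e <;> by_cases hj : j = e <;> simp [hi, hj]
    · simp only [of_apply, hi, hj, ne_eq]

theorem finrank_Dd2_inf_fixedSpace_stabilizer (hd : 2 ≤ d) (e : Fin d) :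
    Module.finrank ℝ ↥(Dd2 d ⊓ fixedSpace {σ : Equiv.Perm (Fin d) | σ e = e}) = 1 := by
  rw [Dd2_inf_fixedSpace_stabilizer hd e]
  refine finrank_span_singleton fun h => ?_
  obtain ⟨z, hz⟩ := @exists_ne _ (Fin.nontrivial_iff_two_le.2 hd) e
  simpa [hz] using congr_fun₂ h z z

theorem finrank_Sd2_inf_fixedSpace_stabilizer (hd : 3 ≤ d) (e : Fin d) :
    Module.finrank ℝ ↥(Sd2 d ⊓ fixedSpace {σ : Equiv.Perm (Fin d) | σ e = e}) = 1 := by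
  rw [Sd2_inf_fixedSpace_stabilizer hd e]
  refine finrank_span_singleton fun h => ?_
  obtain ⟨z, hz⟩ := @exists_ne _ (Fin.nontrivial_iff_two_le.2 (by omega)) e
  simpa [hz] using congr_fun₂ h z e

theorem finrank_Ad1_inf_fixedSpace_stabilizer (hd : 2 ≤ d) (e : Fin d) :
    Module.finrank ℝ ↥(Ad1 d ⊓ fixedSpace {σ : Equiv.Perm (Fin d) | σ e = e}) = 1 := by
  rw [Ad1_inf_fixedSpace_stabilizer hd e]
  refine finrank_span_singleton fun h => ?_
  obtain ⟨z, hz⟩ := @exists_ne _ (Fin.nontrivial_iff_two_le.2 hd) e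
  simpa [hz] using congr_fun₂ h e z

theorem finrank_sup_inf_fixedSpace_stabilizer (hd : 3 ≤ d) (e : Fin d) :
    Module.finrank ℝ
      ↥((Dd2 d ⊔ Sd2 d ⊔ Ad1 d) ⊓ fixedSpace {σ : Equiv.Perm (Fin d) | σ e = e}) = 3 := by
  rw [sup_inf_fixedSpace, Submodule.finrank_sup_of_disjoint, Submodule.finrank_sup_of_disjoint,
    finrank_Dd2_inf_fixedSpace_stabilizer (by omega), finrank_Sd2_inf_fixedSpace_stabilizer hd,
    finrank_Ad1_inf_fixedSpace_stabilizer (by omega)]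
  · exact disjoint_Dd2_Sd2.mono inf_le_left inf_le_left
  · exact disjoint_Dd2_sup_Sd2_Ad1.mono (sup_le_sup inf_le_left inf_le_left) inf_le_left

end

/-- for `d ≥ 3` and `G = S_{d−1} × S_1` (permutations fixing the last
index), each of `𝔻_{d,2} ∩ M(d,d)^G`, `𝕊_{d,2} ∩ M(d,d)^G`, `𝔸_{d,1} ∩ M(d,d)^G` is
the one-dimensional span of an explicit matrix, and consequently `V_s ∩ M(d,d)^G` is
three-dimensional. -/
theorem Vs_inter_fixed_stabilizer (d : ℕ) (hd : 3 ≤ d) :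
    Dd2 d ⊓ fixedSpace {σ : Equiv.Perm (Fin d) | σ ⟨d - 1, by omega⟩ = ⟨d - 1, by omega⟩} =
      Submodule.span ℝ
        {Matrix.diagonal fun i : Fin d => if i = ⟨d - 1, by omega⟩ then (d : ℝ) - 1 else -1} ∧
    Module.finrank ℝ
      ↥(Dd2 d ⊓ fixedSpace {σ : Equiv.Perm (Fin d) | σ ⟨d - 1, by omega⟩ = ⟨d - 1, by omega⟩}) = 1 ∧
    Sd2 d ⊓ fixedSpace {σ : Equiv.Perm (Fin d) | σ ⟨d - 1, by omega⟩ = ⟨d - 1, by omega⟩} =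
      Submodule.span ℝ
        {Matrix.of fun i j : Fin d => if i = j then (0 : ℝ)
          else if i = ⟨d - 1, by omega⟩ ∨ j = ⟨d - 1, by omega⟩ then 1
          else -2 / ((d : ℝ) - 2)} ∧
    Module.finrank ℝ
      ↥(Sd2 d ⊓ fixedSpace {σ : Equiv.Perm (Fin d) | σ ⟨d - 1, by omega⟩ = ⟨d - 1, by omega⟩}) = 1 ∧
    Ad1 d ⊓ fixedSpace {σ : Equiv.Perm (Fin d) | σ ⟨d - 1, by omega⟩ = ⟨d - 1, by omega⟩} =
      Submodule.span ℝ
        {Matrix.of fun i j : Fin d =>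
          if i = ⟨d - 1, by omega⟩ ∧ j ≠ ⟨d - 1, by omega⟩ then (1 : ℝ)
          else if j = ⟨d - 1, by omega⟩ ∧ i ≠ ⟨d - 1, by omega⟩ then -1
          else 0} ∧
    Module.finrank ℝ
      ↥(Ad1 d ⊓ fixedSpace {σ : Equiv.Perm (Fin d) | σ ⟨d - 1, by omega⟩ = ⟨d - 1, by omega⟩}) = 1 ∧
    Module.finrank ℝ
      ↥((Dd2 d ⊔ Sd2 d ⊔ Ad1 d) ⊓
        fixedSpace {σ : Equiv.Perm (Fin d) | σ ⟨d - 1, by omega⟩ = ⟨d - 1, by omega⟩}) = 3 :=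
  ⟨Dd2_inf_fixedSpace_stabilizer (by omega) _, finrank_Dd2_inf_fixedSpace_stabilizer (by omega) _,
    Sd2_inf_fixedSpace_stabilizer hd _, finrank_Sd2_inf_fixedSpace_stabilizer hd _,
    Ad1_inf_fixedSpace_stabilizer (by omega) _, finrank_Ad1_inf_fixedSpace_stabilizer (by omega) _,
    finrank_sup_inf_fixedSpace_stabilizer hd _⟩
end

section
/- Let d ≥ 4 and let A : M(d,d) → M(d,d) be a linear map satisfying A(P_σ W P_σᵀ) = P_σ A(W) P_σᵀ for all σ ∈ S_d and all W. Then A preserves each of the four subspaces V_t = span{I_d, J_d − I_d}, V_s = 𝔻_{d,2} + 𝕊_{d,2} + 𝔸_{d,1}, V_x = 𝔸_{d,2}, and V_y = 𝕊_{d,3}; that is, A(V) ⊆ V for V ∈ {V_t, V_s, V_x, V_y}. -/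
open Matrix

/-- The all-ones matrix. -/
def Jmat (d : ℕ) : Matrix (Fin d) (Fin d) ℝ := Matrix.of fun _ _ => (1 : ℝ)

/-- `𝔸_{d,2}`: skew-symmetric matrices with all row sums zero. -/
def Ad2 (d : ℕ) : Submodule ℝ (Matrix (Fin d) (Fin d) ℝ) where
  carrier := {A | Aᵀ = -A ∧ ∀ i, ∑ j, A i j = 0}
  zero_mem' := ⟨by simp, by simp⟩
  add_mem' := by
    rintro a b ⟨ha1, ha2⟩ ⟨hb1, hb2⟩
    refine ⟨by rw [Matrix.transpose_add, ha1, hb1, neg_add], fun i => ?_⟩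
    simp [Matrix.add_apply, Finset.sum_add_distrib, ha2 i, hb2 i]
  smul_mem' := by
    rintro c a ⟨ha1, ha2⟩
    refine ⟨by rw [Matrix.transpose_smul, ha1, smul_neg], fun i => ?_⟩
    simp [Matrix.smul_apply, ← Finset.mul_sum, ha2 i]

/-- `𝕊_{d,3}`: symmetric, zero diagonal, all row sums zero. -/
def Sd3 (d : ℕ) : Submodule ℝ (Matrix (Fin d) (Fin d) ℝ) where
  carrier := {A | Aᵀ = A ∧ (∀ i, A i i = 0) ∧ ∀ i, ∑ j, A i j = 0}
  zero_mem' := ⟨by simp, fun i => rfl, by simp⟩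
  add_mem' := by
    rintro a b ⟨ha1, ha2, ha3⟩ ⟨hb1, hb2, hb3⟩
    refine ⟨by rw [Matrix.transpose_add, ha1, hb1], fun i => ?_, fun i => ?_⟩
    · simp [Matrix.add_apply, ha2 i, hb2 i]
    · simp [Matrix.add_apply, Finset.sum_add_distrib, ha3 i, hb3 i]
  smul_mem' := by
    rintro c a ⟨ha1, ha2, ha3⟩
    refine ⟨by rw [Matrix.transpose_smul, ha1], fun i => ?_, fun i => ?_⟩
    · simp [Matrix.smul_apply, ha2 i]
    · simp [Matrix.smul_apply, ← Finset.mul_sum, ha3 i]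

/-- `V_t = span{I, J − I}`, the trivial isotypic component. -/
def Vt (d : ℕ) : Submodule ℝ (Matrix (Fin d) (Fin d) ℝ) :=
  Submodule.span ℝ {(1 : Matrix (Fin d) (Fin d) ℝ), Jmat d - 1}

/-- `V_s = 𝔻_{d,2} + 𝕊_{d,2} + 𝔸_{d,1}`, the standard isotypic component. -/
def Vs (d : ℕ) : Submodule ℝ (Matrix (Fin d) (Fin d) ℝ) := Dd2 d ⊔ Sd2 d ⊔ Ad1 d

/-!
The operator `T W = ∑_{a,b} P_{(a b)} W P_{(a b)}ᵀ` is a sum of conjugations by permutation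
matrices, so it commutes with every equivariant `A`, and `A` therefore maps each eigenspace of `T`
into itself. A direct computation shows that `T` acts on `V_t`, `V_s`, `V_y`, `V_x` as the scalars
`d²`, `d² - 2d`, `d² - 4d + 4`, `d² - 4d`, which are pairwise distinct for `d ≥ 3`. Since the four
subspaces together span `M(d,d)`, independence of eigenspaces forces each of them to be a full
eigenspace of `T`.
-/

theorem Module.End.eigenspace_eq_of_iSup_eq_top {ι R M : Type*} [CommRing R]
    [IsDomain R] [AddCommGroup M] [Module R M] [Module.IsTorsionFree R M] (T : Module.End R M)
    (V : ι → Submodule R M) (c : ι → R) (hc : Function.Injective c)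
    (hV : ∀ i, V i ≤ T.eigenspace (c i)) (htop : ⨆ i, V i = ⊤) (i : ι) :
    T.eigenspace (c i) = V i := by
  have hothers : ⨆ (j) (_ : j ≠ i), V j ≤ ⨆ (μ) (_ : μ ≠ c i), T.eigenspace μ :=
    iSup₂_le fun j hj => le_iSup₂_of_le (c j) (hc.ne hj) (hV j)
  have hdisj := (T.eigenspaces_iSupIndep (c i)).mono_right hothers
  refine le_antisymm ?_ (hV i)
  calc T.eigenspace (c i) = (V i ⊔ ⨆ (j) (_ : j ≠ i), V j) ⊓ T.eigenspace (c i) := by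
        rw [← iSup_split_single, htop, top_inf_eq]
    _ ≤ V i := by rw [sup_inf_assoc_of_le _ (hV i), inf_comm, hdisj.eq_bot, sup_bot_eq]

section SwapApply

variable {α R : Type*} [DecidableEq α] [CommRing R]

theorem apply_swap_eq (f : α → R) (a b x : α) :
    f (Equiv.swap a b x) =
      f x + (if b = x then f a - f x else 0) + (if a = x then f b - f x else 0) := by
  rw [Equiv.swap_apply_def]
  split_ifs <;> subst_vars <;> simp_all

theorem apply_swap_swap_eq (g : α → α → R) {x y : α} (hxy : x ≠ y) (a b : α) :
    g (Equiv.swap a b x) (Equiv.swap a b y) =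
      g x y + (if b = x then g a y - g x y else 0) + (if a = x then g b y - g x y else 0)
        + (if b = y then g x a - g x y else 0) + (if a = y then g x b - g x y else 0)
        + (if a = x then if b = y then g y x - g x x - g y y + g x y else 0 else 0)
        + (if a = y then if b = x then g y x - g x x - g y y + g x y else 0 else 0) := by
  simp only [Equiv.swap_apply_def]
  split_ifs <;> subst_vars <;> (try simp_all) <;> ring

variable [Fintype α]

theorem sum_sum_apply_swap (f : α → R) (x : α) :
    ∑ a, ∑ b, f (Equiv.swap a b x) =
      2 * ∑ k, f k + ((Fintype.card α : R) ^ 2 - 2 * Fintype.card α) * f x := by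
  simp only [apply_swap_eq, Finset.sum_add_distrib, Finset.sum_ite_irrel,
    Finset.sum_const_zero, Finset.sum_ite_eq', Finset.mem_univ, if_true, Finset.sum_const,
    Finset.card_univ, nsmul_eq_mul, Finset.sum_sub_distrib]
  ring

theorem sum_sum_apply_swap_swap (g : α → α → R) {x y : α} (hxy : x ≠ y) :
    ∑ a, ∑ b, g (Equiv.swap a b x) (Equiv.swap a b y) =
      ((Fintype.card α : R) ^ 2 - 4 * Fintype.card α + 2) * g x y + 2 * g y x
        + 2 * ∑ k, g k y + 2 * ∑ k, g x k - 2 * g x x - 2 * g y y := by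
  simp only [apply_swap_swap_eq g hxy, Finset.sum_add_distrib, Finset.sum_ite_irrel,
    Finset.sum_const_zero, Finset.sum_ite_eq', Finset.mem_univ, if_true, Finset.sum_const,
    Finset.card_univ, nsmul_eq_mul, Finset.sum_sub_distrib]
  ring

end SwapApply

section SwapSum

variable {d : ℕ}

def permConj (σ : Equiv.Perm (Fin d)) : Module.End ℝ (Matrix (Fin d) (Fin d) ℝ) where
  toFun W := permMat σ * W * (permMat σ)ᵀ
  map_add' U W := by rw [Matrix.mul_add, Matrix.add_mul]
  map_smul' r W := by rw [Matrix.mul_smul, Matrix.smul_mul, RingHom.id_apply]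

theorem permConj_apply (σ : Equiv.Perm (Fin d)) (W : Matrix (Fin d) (Fin d) ℝ) (i j : Fin d) :
    permConj σ W i j = W (σ.symm i) (σ.symm j) := by
  simp [permConj, permMat, Matrix.mul_apply, ← Equiv.eq_symm_apply]

variable (d) in
def swapSum : Module.End ℝ (Matrix (Fin d) (Fin d) ℝ) :=
  ∑ a, ∑ b, permConj (Equiv.swap a b)

theorem swapSum_apply (W : Matrix (Fin d) (Fin d) ℝ) (x y : Fin d) :
    swapSum d W x y = ∑ a, ∑ b, W (Equiv.swap a b x) (Equiv.swap a b y) := by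
  simp [swapSum, LinearMap.sum_apply, Matrix.sum_apply, permConj_apply]

theorem commute_swapSum {A : Module.End ℝ (Matrix (Fin d) (Fin d) ℝ)}
    (hA : ∀ σ W, A (permMat σ * W * (permMat σ)ᵀ) = permMat σ * A W * (permMat σ)ᵀ) :
    Commute (swapSum d) A := by
  ext1 W
  simp [swapSum, LinearMap.sum_apply, Module.End.mul_apply, map_sum, permConj, hA]

theorem swapSum_apply_self (W : Matrix (Fin d) (Fin d) ℝ) (x : Fin d) :
    swapSum d W x x = 2 * W.trace + ((d : ℝ) ^ 2 - 2 * d) * W x x := by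
  rw [swapSum_apply, sum_sum_apply_swap (fun k => W k k), Fintype.card_fin, Matrix.trace]
  rfl

theorem swapSum_apply_of_ne (W : Matrix (Fin d) (Fin d) ℝ) {x y : Fin d} (hxy : x ≠ y) :
    swapSum d W x y = ((d : ℝ) ^ 2 - 4 * d + 2) * W x y + 2 * W y x
      + 2 * ∑ k, W k y + 2 * ∑ k, W x k - 2 * W x x - 2 * W y y := by
  rw [swapSum_apply, sum_sum_apply_swap_swap W hxy, Fintype.card_fin]

theorem mem_eigenspace_swapSum {W : Matrix (Fin d) (Fin d) ℝ} {c : ℝ}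
    (hdiag : ∀ x, 2 * W.trace + ((d : ℝ) ^ 2 - 2 * d) * W x x = c * W x x)
    (hoff : ∀ x y, x ≠ y → ((d : ℝ) ^ 2 - 4 * d + 2) * W x y + 2 * W y x
      + 2 * ∑ k, W k y + 2 * ∑ k, W x k - 2 * W x x - 2 * W y y = c * W x y) :
    W ∈ (swapSum d).eigenspace c := by
  rw [Module.End.mem_eigenspace_iff]
  ext x y
  rcases eq_or_ne x y with rfl | hxy
  · rw [swapSum_apply_self, hdiag, Matrix.smul_apply, smul_eq_mul]
  · rw [swapSum_apply_of_ne W hxy, hoff x y hxy, Matrix.smul_apply, smul_eq_mul]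

end SwapSum

section Eigenspaces

variable {d : ℕ}

theorem one_mem_eigenspace_swapSum :
    (1 : Matrix (Fin d) (Fin d) ℝ) ∈ (swapSum d).eigenspace ((d : ℝ) ^ 2) := by
  refine mem_eigenspace_swapSum (fun x => ?_) (fun x y hxy => ?_)
  · simp only [Matrix.trace_one, Fintype.card_fin, Matrix.one_apply_eq]
    ring
  · simp [Matrix.one_apply, hxy, hxy.symm]

theorem Jmat_mem_eigenspace_swapSum : Jmat d ∈ (swapSum d).eigenspace ((d : ℝ) ^ 2) := by
  refine mem_eigenspace_swapSum (fun x => ?_) (fun x y _ => ?_)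
  · simp only [Jmat, Matrix.trace, Matrix.diag, Matrix.of_apply, Finset.sum_const,
      Finset.card_univ, Fintype.card_fin, nsmul_eq_mul]
    ring
  · simp only [Jmat, Matrix.of_apply, Finset.sum_const, Finset.card_univ, Fintype.card_fin,
      nsmul_eq_mul]
    ring

theorem Vt_le_eigenspace_swapSum : Vt d ≤ (swapSum d).eigenspace ((d : ℝ) ^ 2) := by
  refine Submodule.span_le.mpr (Set.insert_subset_iff.mpr ⟨one_mem_eigenspace_swapSum, ?_⟩)
  exact Set.singleton_subset_iff.mpr
    (Submodule.sub_mem _ Jmat_mem_eigenspace_swapSum one_mem_eigenspace_swapSum)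

theorem Dd2_le_eigenspace_swapSum : Dd2 d ≤ (swapSum d).eigenspace ((d : ℝ) ^ 2 - 2 * d) := by
  rintro W ⟨hoff, htr⟩
  have hcol : ∀ y, ∑ k, W k y = W y y := fun y =>
    Finset.sum_eq_single y (fun k _ hk => hoff k y hk) (by simp)
  have hrow : ∀ x, ∑ k, W x k = W x x := fun x =>
    Finset.sum_eq_single x (fun k _ hk => hoff x k hk.symm) (by simp)
  refine mem_eigenspace_swapSum (fun x => ?_) (fun x y hxy => ?_)
  · rw [show W.trace = 0 from htr]
    ring
  · rw [hcol, hrow, hoff x y hxy, hoff y x hxy.symm]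
    ring

theorem sum_apply_eq_of_Sd2 {W : Matrix (Fin d) (Fin d) ℝ} {v : Fin d → ℝ}
    (hv : ∑ i, v i = 0) (hdiag : ∀ i, W i i = 0) (hoff : ∀ i j, i ≠ j → W i j = v i + v j)
    (i : Fin d) : ∑ j, W i j = ((d : ℝ) - 2) * v i := by
  have hentry : ∀ j, W i j = v i + v j - if i = j then v i + v j else 0 := by
    intro j
    rcases eq_or_ne i j with rfl | hij
    · simp [hdiag]
    · simp [hoff i j hij, hij]
  simp only [hentry, Finset.sum_sub_distrib, Finset.sum_add_distrib, hv, Finset.sum_ite_eq,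
    Finset.mem_univ, if_true, Finset.sum_const, Finset.card_univ, Fintype.card_fin,
    nsmul_eq_mul]
  ring

theorem Sd2_le_eigenspace_swapSum : Sd2 d ≤ (swapSum d).eigenspace ((d : ℝ) ^ 2 - 2 * d) := by
  rintro W ⟨v, hv, hdiag, hoff⟩
  have hrow := sum_apply_eq_of_Sd2 hv hdiag hoff
  have hcol : ∀ y, ∑ k, W k y = ((d : ℝ) - 2) * v y :=
    sum_apply_eq_of_Sd2 (W := Wᵀ) hv hdiag fun i j hij => by
      rw [Matrix.transpose_apply, hoff j i hij.symm, add_comm]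
  refine mem_eigenspace_swapSum (fun x => ?_) (fun x y hxy => ?_)
  · simp [Matrix.trace, hdiag]
  · rw [hcol, hrow, hoff x y hxy, hoff y x hxy.symm, hdiag, hdiag]
    ring

theorem Ad1_le_eigenspace_swapSum : Ad1 d ≤ (swapSum d).eigenspace ((d : ℝ) ^ 2 - 2 * d) := by
  rintro W ⟨v, hv⟩
  refine mem_eigenspace_swapSum (fun x => ?_) (fun x y _ => ?_)
  · simp [Matrix.trace, hv]
  · simp only [hv, Finset.sum_sub_distrib, Finset.sum_const, Finset.card_univ,
      Fintype.card_fin, nsmul_eq_mul]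
    ring

theorem Vs_le_eigenspace_swapSum : Vs d ≤ (swapSum d).eigenspace ((d : ℝ) ^ 2 - 2 * d) :=
  sup_le (sup_le Dd2_le_eigenspace_swapSum Sd2_le_eigenspace_swapSum) Ad1_le_eigenspace_swapSum

theorem mem_eigenspace_swapSum_of_transpose_eq_smul {W : Matrix (Fin d) (Fin d) ℝ} {s : ℝ}
    (hW : Wᵀ = s • W) (hdiag : ∀ i, W i i = 0) (hrow : ∀ i, ∑ j, W i j = 0) :
    W ∈ (swapSum d).eigenspace ((d : ℝ) ^ 2 - 4 * d + 2 + 2 * s) := by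
  have hentry : ∀ i j, W j i = s * W i j := fun i j => by
    simpa using congr_fun₂ hW i j
  have hcol : ∀ j, ∑ i, W i j = 0 := fun j => by
    simp only [hentry j, ← Finset.mul_sum, hrow, mul_zero]
  refine mem_eigenspace_swapSum (fun x => ?_) (fun x y _ => ?_)
  · simp [Matrix.trace, hdiag]
  · rw [hentry x y, hcol, hrow, hdiag, hdiag]
    ring

theorem Sd3_le_eigenspace_swapSum :
    Sd3 d ≤ (swapSum d).eigenspace ((d : ℝ) ^ 2 - 4 * d + 4) := by
  rintro W ⟨hsymm, hdiag, hrow⟩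
  convert mem_eigenspace_swapSum_of_transpose_eq_smul (s := 1) (by rw [hsymm, one_smul])
    hdiag hrow using 2
  ring

theorem Ad2_le_eigenspace_swapSum : Ad2 d ≤ (swapSum d).eigenspace ((d : ℝ) ^ 2 - 4 * d) := by
  rintro W ⟨hskew, hrow⟩
  have hdiag : ∀ i, W i i = 0 := fun i => by
    have := congr_fun₂ hskew i i
    simp only [Matrix.transpose_apply, Matrix.neg_apply] at this
    linarith
  convert mem_eigenspace_swapSum_of_transpose_eq_smul (s := -1) (by rw [hskew, neg_one_smul])
    hdiag hrow using 2
  ring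

end Eigenspaces

section Decomposition

variable {d : ℕ}

theorem mem_Ad1_sup_Ad2_of_transpose_eq_neg (hd : (d : ℝ) ≠ 0)
    {K : Matrix (Fin d) (Fin d) ℝ} (hK : Kᵀ = -K) : K ∈ Ad1 d ⊔ Ad2 d := by
  have hentry : ∀ i j, K j i = -K i j := fun i j => by simpa using congr_fun₂ hK i j
  have htotal : ∑ i, ∑ j, K i j = 0 := by
    have : ∑ i, ∑ j, K i j = -∑ i, ∑ j, K i j :=
      calc ∑ i, ∑ j, K i j = ∑ j, ∑ i, K i j := Finset.sum_comm
        _ = ∑ j, ∑ i, -K j i := by simp_rw [← hentry]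
        _ = -∑ i, ∑ j, K i j := by simp only [Finset.sum_neg_distrib]
    linarith
  set v : Fin d → ℝ := fun i => (∑ j, K i j) / d
  have hv : ∑ i, v i = 0 := by simp only [v, ← Finset.sum_div, htotal, zero_div]
  let G : Matrix (Fin d) (Fin d) ℝ := Matrix.of fun i j => v i - v j
  refine Submodule.mem_sup.mpr ⟨G, ⟨v, fun i j => rfl⟩, K - G, ⟨?_, fun i => ?_⟩, by abel⟩
  · ext i j
    simp only [G, Matrix.transpose_apply, Matrix.sub_apply, Matrix.neg_apply, Matrix.of_apply,
      hentry i j]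
    ring
  · simp only [G, Matrix.sub_apply, Matrix.of_apply, Finset.sum_sub_distrib, hv,
      Finset.sum_const, Finset.card_univ, Fintype.card_fin, nsmul_eq_mul, v]
    field_simp
    ring

theorem diagonal_mem_Vt_sup_Dd2 (hd : (d : ℝ) ≠ 0) (w : Fin d → ℝ) :
    Matrix.diagonal w ∈ Vt d ⊔ Dd2 d := by
  set t := (∑ i, w i) / d
  have h1 : t • (1 : Matrix (Fin d) (Fin d) ℝ) ∈ Vt d :=
    Submodule.smul_mem _ _ (Submodule.subset_span (Set.mem_insert _ _))
  refine Submodule.mem_sup.mpr ⟨_, h1, Matrix.diagonal w - t • 1, ⟨fun i j hij => ?_, ?_⟩,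
    by abel⟩
  · simp [Matrix.diagonal_apply_ne _ hij, Matrix.one_apply_ne hij]
  · simp only [Matrix.sub_apply, Matrix.diagonal_apply_eq, Matrix.smul_apply,
      Matrix.one_apply_eq, smul_eq_mul, mul_one, Finset.sum_sub_distrib, Finset.sum_const,
      Finset.card_univ, Fintype.card_fin, nsmul_eq_mul, t]
    field_simp
    ring

theorem mem_Vt_sup_Sd2_sup_Sd3_of_transpose_eq (hd : 3 ≤ d) {Z : Matrix (Fin d) (Fin d) ℝ}
    (hZ : Zᵀ = Z) (hdiag : ∀ i, Z i i = 0) : Z ∈ Vt d ⊔ Sd2 d ⊔ Sd3 d := by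
  have hd' : (3 : ℝ) ≤ d := by exact_mod_cast hd
  have hentry : ∀ i j, Z j i = Z i j := fun i j => by simpa using congr_fun₂ hZ i j
  set ρ : Fin d → ℝ := fun i => ∑ j, Z i j
  set m := (∑ i, ρ i) / (d * (d - 1))
  set v : Fin d → ℝ := fun i => (ρ i - m * (d - 1)) / (d - 2)
  have hv : ∑ i, v i = 0 := by
    simp only [v, m, ← Finset.sum_div, Finset.sum_sub_distrib, Finset.sum_const,
      Finset.card_univ, Fintype.card_fin, nsmul_eq_mul]
    field_simp [show (d : ℝ) - 1 ≠ 0 by linarith]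
    ring
  set S : Matrix (Fin d) (Fin d) ℝ := Matrix.of fun i j => if i = j then 0 else v i + v j
  have hS : S ∈ Sd2 d := ⟨v, hv, fun i => by simp [S], fun i j hij => by simp [S, hij]⟩
  have hJ : m • (Jmat d - 1) ∈ Vt d :=
    Submodule.smul_mem _ _ (Submodule.subset_span (Set.mem_insert_of_mem _ rfl))
  have hrest : Z - m • (Jmat d - 1) - S ∈ Sd3 d := by
    refine ⟨?_, fun i => by simp [S, Jmat, hdiag], fun i => ?_⟩
    · ext i j
      simp only [S, Jmat, Matrix.transpose_apply, Matrix.sub_apply, Matrix.smul_apply,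
        Matrix.of_apply, Matrix.one_apply, hentry i j, eq_comm (a := j), add_comm (v j)]
    · have hSrow := sum_apply_eq_of_Sd2 (W := S) hv (fun i => by simp [S])
        (fun i j hij => by simp [S, hij]) i
      simp only [Matrix.sub_apply, Finset.sum_sub_distrib, hSrow]
      simp only [Jmat, Matrix.smul_apply, Matrix.sub_apply, Matrix.of_apply, Matrix.one_apply,
        smul_eq_mul, mul_sub, mul_one, mul_ite, mul_zero, Finset.sum_sub_distrib,
        Finset.sum_ite_eq, Finset.mem_univ, if_true, Finset.sum_const, Finset.card_univ,
        Fintype.card_fin, nsmul_eq_mul, v]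
      field_simp [show (d : ℝ) - 2 ≠ 0 by linarith]
      ring
  have : Z = m • (Jmat d - 1) + S + (Z - m • (Jmat d - 1) - S) := by abel
  rw [this]
  exact Submodule.add_mem_sup (Submodule.add_mem_sup hJ hS) hrest

theorem Vt_sup_Vs_sup_Sd3_sup_Ad2_eq_top (hd : 3 ≤ d) :
    Vt d ⊔ Vs d ⊔ Sd3 d ⊔ Ad2 d = ⊤ := by
  have hd0 : (d : ℝ) ≠ 0 := by positivity
  set T := Vt d ⊔ Vs d ⊔ Sd3 d ⊔ Ad2 d
  have hVt : Vt d ≤ T := le_sup_left.trans (le_sup_left.trans le_sup_left)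
  have hVs : Vs d ≤ T := le_sup_right.trans (le_sup_left.trans le_sup_left)
  have hSd3 : Sd3 d ≤ T := le_sup_right.trans le_sup_left
  have hAd2 : Ad2 d ≤ T := le_sup_right
  have hDd2 : Dd2 d ≤ T := le_sup_left.trans (le_sup_left.trans hVs)
  have hSd2 : Sd2 d ≤ T := le_sup_right.trans (le_sup_left.trans hVs)
  have hAd1 : Ad1 d ≤ T := le_sup_right.trans hVs
  refine eq_top_iff.mpr fun U _ => ?_
  set D := Matrix.diagonal U.diag
  set Z := (1 / 2 : ℝ) • (U + Uᵀ) - D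
  set K := (1 / 2 : ℝ) • (U - Uᵀ)
  have hU : U = D + Z + K := by
    simp only [Z, K, smul_sub, smul_add]
    module
  have hD : D ∈ T := sup_le hVt hDd2 (diagonal_mem_Vt_sup_Dd2 hd0 _)
  have hZ : Z ∈ T := by
    refine sup_le (sup_le hVt hSd2) hSd3 (mem_Vt_sup_Sd2_sup_Sd3_of_transpose_eq hd ?_ ?_)
    · simp only [Z, D, Matrix.transpose_sub, Matrix.transpose_smul, Matrix.transpose_add,
        Matrix.transpose_transpose, Matrix.diagonal_transpose, add_comm Uᵀ]
    · intro i
      simp only [Z, D, Matrix.sub_apply, Matrix.smul_apply, Matrix.add_apply,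
        Matrix.transpose_apply, Matrix.diagonal_apply_eq, Matrix.diag_apply, smul_eq_mul]
      ring
  have hK : K ∈ T := by
    refine sup_le hAd1 hAd2 (mem_Ad1_sup_Ad2_of_transpose_eq_neg hd0 ?_)
    simp only [K, Matrix.transpose_smul, Matrix.transpose_sub, Matrix.transpose_transpose,
      ← smul_neg, neg_sub]
  rw [hU]
  exact add_mem (add_mem hD hZ) hK

end Decomposition

/-- for `d ≥ 4`, any `S_d`-equivariant linear endomorphism of `M(d,d)`
(for the diagonal action `W ↦ P_σ W P_σᵀ`) preserves each of the four isotypic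
components `V_t`, `V_s`, `V_x = 𝔸_{d,2}` and `V_y = 𝕊_{d,3}`. -/
theorem equivariant_map_preserves_isotypic_components (d : ℕ) (hd : 4 ≤ d)
    (A : Matrix (Fin d) (Fin d) ℝ →ₗ[ℝ] Matrix (Fin d) (Fin d) ℝ)
    (hA : ∀ (σ : Equiv.Perm (Fin d)) (W : Matrix (Fin d) (Fin d) ℝ),
      A (permMat σ * W * (permMat σ)ᵀ) = permMat σ * A W * (permMat σ)ᵀ) :
    (∀ W ∈ Vt d, A W ∈ Vt d) ∧
    (∀ W ∈ Vs d, A W ∈ Vs d) ∧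
    (∀ W ∈ Ad2 d, A W ∈ Ad2 d) ∧
    (∀ W ∈ Sd3 d, A W ∈ Sd3 d) := by
  have hd' : (4 : ℝ) ≤ d := by exact_mod_cast hd
  let V : Fin 4 → Submodule ℝ (Matrix (Fin d) (Fin d) ℝ) := ![Vt d, Vs d, Sd3 d, Ad2 d]
  let c : Fin 4 → ℝ :=
    ![(d : ℝ) ^ 2, (d : ℝ) ^ 2 - 2 * d, (d : ℝ) ^ 2 - 4 * d + 4, (d : ℝ) ^ 2 - 4 * d]
  have hc : StrictAnti c := Fin.strictAnti_iff_succ_lt.mpr fun i => by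
    fin_cases i <;> simp [c] <;> linarith
  have hV : ∀ i, V i ≤ (swapSum d).eigenspace (c i) := fun i => by
    fin_cases i
    exacts [Vt_le_eigenspace_swapSum, Vs_le_eigenspace_swapSum, Sd3_le_eigenspace_swapSum,
      Ad2_le_eigenspace_swapSum]
  have htop : ⨆ i, V i = ⊤ := eq_top_iff.mpr <|
    (Vt_sup_Vs_sup_Sd3_sup_Ad2_eq_top (by omega)).ge.trans <|
      sup_le (sup_le (sup_le (le_iSup V 0) (le_iSup V 1)) (le_iSup V 2)) (le_iSup V 3)
  have hpres : ∀ i, ∀ W ∈ V i, A W ∈ V i := fun i => by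
    rw [← (swapSum d).eigenspace_eq_of_iSup_eq_top V c hc.injective hV htop i]
    exact Module.End.mapsTo_genEigenspace_of_comm (commute_swapSum hA) _ 1
  exact ⟨hpres 0, hpres 1, hpres 3, hpres 2⟩
end
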